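/- Convergence in the integrator for the Kurzweil–Stieltjes integral: let f : [a,b] → ℝ have bounded variation, and g_n : [a,b] → ℝ be such that (K)∫_a^b f dg_n exists for every n and g_n → g uniformly on [a,b]. Then (K)∫_a^b f dg exists and lim_{n→∞} (K)∫_a^b f dg_n = (K)∫_a^b f dg. -/

import Mathlib

open Set Filter

/-- A tagged partition of `[a,b]`: points `a = pts 0 < pts 1 < … < pts n = b`
with tags `tag j ∈ [pts j, pts (j+1)]`. -/
structure TaggedPartition (a b : ℝ) where
  n : ℕ
  pts : ℕ → ℝ
  tag : ℕ → ℝ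
  n_pos : 0 < n
  pts_zero : pts 0 = a
  pts_last : pts n = b
  pts_mono : ∀ j < n, pts j < pts (j + 1)
  tag_mem : ∀ j < n, tag j ∈ Set.Icc (pts j) (pts (j + 1))

/-- Riemann–Stieltjes sum `S(f, dg, P)`. -/
def RS (f g : ℝ → ℝ) {a b : ℝ} (P : TaggedPartition a b) : ℝ :=
  ∑ j ∈ Finset.range P.n, f (P.tag j) * (g (P.pts (j + 1)) - g (P.pts j))

/-- `P` is `δ`-fine. -/
def IsFine (δ : ℝ → ℝ) {a b : ℝ} (P : TaggedPartition a b) : Prop :=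
  ∀ j < P.n, Set.Icc (P.pts j) (P.pts (j + 1)) ⊆
    Set.Icc (P.tag j - δ (P.tag j)) (P.tag j + δ (P.tag j))

/-- The Kurzweil–Stieltjes integral `(K)∫_a^b f dg` exists and equals `I`. -/
def HasKS (f g : ℝ → ℝ) (a b I : ℝ) : Prop :=
  ∀ ε > 0, ∃ δ : ℝ → ℝ, (∀ t ∈ Set.Icc a b, 0 < δ t ∧ δ t < 1) ∧
    ∀ P : TaggedPartition a b, IsFine δ P → |RS f g P - I| < ε

/-- The division of `P` contains all points of the finite set `D`. -/
def Refines {a b : ℝ} (P : TaggedPartition a b) (D : Finset ℝ) : Prop :=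
  ∀ x ∈ D, ∃ j ≤ P.n, P.pts j = x

/-- All tags of `P` lie strictly inside the corresponding subintervals. -/
def InteriorTags {a b : ℝ} (P : TaggedPartition a b) : Prop :=
  ∀ j < P.n, P.pts j < P.tag j ∧ P.tag j < P.pts (j + 1)

/-- The Dushnik integral `(D)∫_a^b f dg` exists and equals `I`. -/
def HasDushnik (f g : ℝ → ℝ) (a b I : ℝ) : Prop :=
  ∀ ε > 0, ∃ D : Finset ℝ, ↑D ⊆ Set.Icc a b ∧
    ∀ P : TaggedPartition a b, Refines P D → InteriorTags P → |RS f g P - I| < ε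

/-- `f` is regulated on `[a,b]`: it has finite one-sided limits (within `[a,b]`)
at every point where they make sense. -/
def Regulated (f : ℝ → ℝ) (a b : ℝ) : Prop :=
  (∀ t ∈ Set.Ioc a b, ∃ L : ℝ, Filter.Tendsto f (nhdsWithin t (Set.Ico a t)) (nhds L)) ∧
  (∀ t ∈ Set.Ico a b, ∃ L : ℝ, Filter.Tendsto f (nhdsWithin t (Set.Ioc t b)) (nhds L))

/-- The Young sum `S_Y(f, dg, P)`, where `gl t = g(t-)` and `gr t = g(t+)`
are the one-sided limit functions of `g`. -/
def YS (f gl gr g : ℝ → ℝ) {a b : ℝ} (P : TaggedPartition a b) : ℝ :=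
  ∑ j ∈ Finset.range P.n,
    (f (P.pts j) * (gr (P.pts j) - g (P.pts j))
      + f (P.tag j) * (gl (P.pts (j + 1)) - gr (P.pts j))
      + f (P.pts (j + 1)) * (g (P.pts (j + 1)) - gl (P.pts (j + 1))))

/-- The Young integral `(Y)∫_a^b f dg` exists and equals `I` (here `gl`, `gr`
are the one-sided limit functions of `g`). -/
def HasYoung (f gl gr g : ℝ → ℝ) (a b I : ℝ) : Prop :=
  ∀ ε > 0, ∃ D : Finset ℝ, ↑D ⊆ Set.Icc a b ∧
    ∀ P : TaggedPartition a b, Refines P D → InteriorTags P → |YS f gl gr g P - I| < ε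

/-- `f` is a finite step function on `[a,b]`: constant on the open subintervals
of some division `a = σ 0 < … < σ m = b`. -/
def IsStepFunction (f : ℝ → ℝ) (a b : ℝ) : Prop :=
  ∃ (m : ℕ) (σ : ℕ → ℝ), 0 < m ∧ σ 0 = a ∧ σ m = b ∧ (∀ k < m, σ k < σ (k + 1)) ∧
    ∀ k < m, ∀ x ∈ Set.Ioo (σ k) (σ (k + 1)), ∀ y ∈ Set.Ioo (σ k) (σ (k + 1)), f x = f y

/-- The (real-valued) total variation of `g` on `[a,b]`. -/
noncomputable def var (g : ℝ → ℝ) (a b : ℝ) : ℝ :=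
  (eVariationOn g (Set.Icc a b)).toReal

/-!
Summation by parts bounds a Riemann–Stieltjes sum against an integrator `h` by
`(2 sup |f| + var f) · sup |h|`, uniformly in the partition. Evaluating the sums for two
integrators on one partition that is fine for both gauges (Cousin's lemma), the integral is
Lipschitz in the integrator for the sup norm. Hence the integrals `I n` form a Cauchy sequence,
and its limit is the integral against the uniform limit of the integrators.
-/

namespace TaggedPartition

variable {a b : ℝ} (P : TaggedPartition a b)

lemma pts_strictMonoOn : StrictMonoOn P.pts (Iic P.n) :=
  strictMonoOn_Iic_of_lt_succ P.pts_mono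

lemma pts_mem_Icc {j : ℕ} (hj : j ≤ P.n) : P.pts j ∈ Icc a b := by
  have hmono := P.pts_strictMonoOn.monotoneOn
  constructor
  · simpa only [P.pts_zero] using hmono (Nat.zero_le P.n) hj (Nat.zero_le j)
  · simpa only [P.pts_last] using hmono hj (le_refl P.n) hj

lemma tag_mem_Icc {j : ℕ} (hj : j < P.n) : P.tag j ∈ Icc a b :=
  ⟨(P.pts_mem_Icc hj.le).1.trans (P.tag_mem j hj).1,
    (P.tag_mem j hj).2.trans (P.pts_mem_Icc hj).2⟩

lemma tag_monotoneOn : MonotoneOn P.tag (Iio P.n) := by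
  intro i hi j hj hij
  rcases hij.eq_or_lt with rfl | hij
  · exact le_rfl
  calc P.tag i ≤ P.pts (i + 1) := (P.tag_mem i hi).2
    _ ≤ P.pts j :=
        P.pts_strictMonoOn.monotoneOn (show i + 1 ≤ P.n from hi) (show j ≤ P.n from hj.le) hij
    _ ≤ P.tag j := (P.tag_mem j hj).1

def single {x : ℝ} (hax : a < x) {t : ℝ} (ht : t ∈ Icc a x) : TaggedPartition a x where
  n := 1
  pts j := if j = 0 then a else x
  tag _ := t
  n_pos := one_pos
  pts_zero := if_pos rfl
  pts_last := if_neg one_ne_zero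
  pts_mono j hj := by
    obtain rfl : j = 0 := Nat.lt_one_iff.mp hj
    simpa using hax
  tag_mem j hj := by
    obtain rfl : j = 0 := Nat.lt_one_iff.mp hj
    simpa using ht

def snoc {d : ℝ} (hbd : b < d) {t : ℝ} (ht : t ∈ Icc b d) : TaggedPartition a d where
  n := P.n + 1
  pts j := if j = P.n + 1 then d else P.pts j
  tag j := if j = P.n then t else P.tag j
  n_pos := P.n.succ_pos
  pts_zero := by simp [P.pts_zero]
  pts_last := if_pos rfl
  pts_mono j hj := by
    rcases Nat.lt_succ_iff_lt_or_eq.mp hj with hj | rfl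
    · simpa [show j ≠ P.n + 1 by omega, hj.ne, (Nat.succ_lt_succ hj).ne] using P.pts_mono j hj
    · simpa [P.pts_last] using hbd
  tag_mem j hj := by
    rcases Nat.lt_succ_iff_lt_or_eq.mp hj with hj | rfl
    · simpa [show j ≠ P.n + 1 by omega, hj.ne, (Nat.succ_lt_succ hj).ne] using P.tag_mem j hj
    · simpa [P.pts_last] using ht

end TaggedPartition

open TaggedPartition Topology

section Cousin

variable {δ : ℝ → ℝ}

lemma IsFine.mono {a b : ℝ} {δ' : ℝ → ℝ} (h : ∀ t ∈ Icc a b, δ t ≤ δ' t)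
    {P : TaggedPartition a b} (hP : IsFine δ P) : IsFine δ' P := by
  intro j hj
  have hδ := h _ (P.tag_mem_Icc hj)
  exact (hP j hj).trans (Icc_subset_Icc (by linarith) (by linarith))

lemma isFine_single {a x t : ℝ} (hax : a < x) (ht : t ∈ Icc a x)
    (hδ : Icc a x ⊆ Icc (t - δ t) (t + δ t)) : IsFine δ (single hax ht) := by
  intro j hj
  obtain rfl : j = 0 := Nat.lt_one_iff.mp hj
  simpa [single] using hδ

lemma IsFine.snoc {a b d t : ℝ} {P : TaggedPartition a b} (hP : IsFine δ P) (hbd : b < d)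
    (ht : t ∈ Icc b d) (hδ : Icc b d ⊆ Icc (t - δ t) (t + δ t)) : IsFine δ (P.snoc hbd ht) := by
  intro j hj
  rcases Nat.lt_succ_iff_lt_or_eq.mp hj with hj | rfl
  · simpa [TaggedPartition.snoc, show j ≠ P.n + 1 by omega, hj.ne, (Nat.succ_lt_succ hj).ne]
      using hP j hj
  · simpa [TaggedPartition.snoc, P.pts_last] using hδ

lemma exists_isFine_of_step {a x d t : ℝ} (hx : x = a ∨ ∃ P : TaggedPartition a x, IsFine δ P)
    (hxd : x < d) (ht : t ∈ Icc x d) (hδ : Icc x d ⊆ Icc (t - δ t) (t + δ t)) :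
    ∃ P : TaggedPartition a d, IsFine δ P := by
  rcases hx with rfl | ⟨P, hP⟩
  · exact ⟨single hxd ht, isFine_single hxd ht hδ⟩
  · exact ⟨P.snoc hxd ht, hP.snoc hxd ht hδ⟩

/-- Cousin's lemma. -/
theorem exists_isFine {a b : ℝ} (hab : a < b) (hδ : ∀ t ∈ Icc a b, 0 < δ t) :
    ∃ P : TaggedPartition a b, IsFine δ P := by
  set S := {x ∈ Icc a b | x = a ∨ ∃ P : TaggedPartition a x, IsFine δ P}
  have haS : a ∈ S := ⟨left_mem_Icc.mpr hab.le, Or.inl rfl⟩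
  have hbdd : BddAbove S := ⟨b, fun x hx => hx.1.2⟩
  set c := sSup S
  have hc : c ∈ Icc a b := ⟨le_csSup hbdd haS, csSup_le ⟨a, haS⟩ fun x hx => hx.1.2⟩
  have hδc := hδ c hc
  obtain ⟨x, hxS, hcx⟩ := exists_lt_of_lt_csSup ⟨a, haS⟩ (sub_lt_self c hδc)
  have hxc : x ≤ c := le_csSup hbdd hxS
  set d := min b (c + δ c)
  have hcd : c ≤ d := le_min hc.2 (by linarith)
  -- A δ(c)-fine step from `x` reaches `d`; maximality of `c` then forces `d = b`.
  have hdS : d ∈ S := by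
    rcases (hxc.trans hcd).lt_or_eq with hxd | rfl
    · refine ⟨⟨hc.1.trans hcd, min_le_left _ _⟩, Or.inr (exists_isFine_of_step hxS.2 hxd
        ⟨hxc, hcd⟩ (Icc_subset_Icc (by linarith) (min_le_right _ _)))⟩
    · exact hxS
  have hdb : d = b := by
    have hdc : d ≤ c := le_csSup hbdd hdS
    rcases min_choice b (c + δ c) with h | h <;> [exact h; linarith]
  rcases hdS.2 with hda | hfine
  · exact absurd (hdb ▸ hda) hab.ne'
  · exact hdb ▸ hfine

end Cousin

lemma BoundedVariationOn.sum_abs_sub_le {f : ℝ → ℝ} {s : Set ℝ} (hf : BoundedVariationOn f s)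
    {u : ℕ → ℝ} {n : ℕ} (hu : MonotoneOn u (Iic n)) (us : ∀ i ≤ n, u i ∈ s) :
    ∑ i ∈ Finset.range n, |f (u (i + 1)) - f (u i)| ≤ (eVariationOn f s).toReal := by
  have h := eVariationOn.sum_le_of_monotoneOn_Iic (f := f) hu us
  rw [← ENNReal.toReal_le_toReal (ENNReal.sum_ne_top.mpr fun _ _ => edist_ne_top _ _) hf,
    ENNReal.toReal_sum fun _ _ => edist_ne_top _ _] at h
  simpa only [← dist_edist, Real.dist_eq] using h

lemma BoundedVariationOn.abs_le {f : ℝ → ℝ} {a b t : ℝ} (hf : BoundedVariationOn f (Icc a b))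
    (ha : a ≤ b) (ht : t ∈ Icc a b) : |f t| ≤ |f a| + var f a b := by
  have h : dist (f t) (f a) ≤ var f a b := hf.dist_le ht (left_mem_Icc.mpr ha)
  rw [Real.dist_eq] at h
  linarith [abs_sub_abs_le_abs_sub (f t) (f a)]

lemma sum_mul_sub_by_parts (u v : ℕ → ℝ) (m : ℕ) :
    ∑ j ∈ Finset.range (m + 1), u j * (v (j + 1) - v j) =
      u m * v (m + 1) - u 0 * v 0 - ∑ j ∈ Finset.range m, (u (j + 1) - u j) * v (j + 1) := by
  induction m with
  | zero => simp only [zero_add, Finset.sum_range_one, Finset.sum_range_zero]; ring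
  | succ m ih => rw [Finset.sum_range_succ, ih, Finset.sum_range_succ]; ring

lemma abs_sum_mul_sub_le {f : ℝ → ℝ} {s : Set ℝ} (hf : BoundedVariationOn f s) {t v : ℕ → ℝ}
    {m : ℕ} {M η : ℝ} (ht : MonotoneOn t (Iic m)) (hts : ∀ i ≤ m, t i ∈ s)
    (hM : ∀ i ≤ m, |f (t i)| ≤ M) (hv : ∀ i ≤ m + 1, |v i| ≤ η) :
    |∑ j ∈ Finset.range (m + 1), f (t j) * (v (j + 1) - v j)|
      ≤ (2 * M + (eVariationOn f s).toReal) * η := by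
  have hη : 0 ≤ η := (abs_nonneg _).trans (hv 0 (Nat.zero_le _))
  have hM0 : 0 ≤ M := (abs_nonneg _).trans (hM 0 (Nat.zero_le _))
  have hvar : |∑ j ∈ Finset.range m, (f (t (j + 1)) - f (t j)) * v (j + 1)|
      ≤ (eVariationOn f s).toReal * η :=
    calc _ ≤ ∑ j ∈ Finset.range m, |f (t (j + 1)) - f (t j)| * η := by
          refine (Finset.abs_sum_le_sum_abs _ _).trans (Finset.sum_le_sum fun j hj => ?_)
          rw [abs_mul]
          exact mul_le_mul_of_nonneg_left
            (hv _ (Nat.succ_le_succ (Finset.mem_range.mp hj).le)) (abs_nonneg _)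
      _ ≤ _ := by
          rw [← Finset.sum_mul]
          exact mul_le_mul_of_nonneg_right (hf.sum_abs_sub_le ht hts) hη
  have hlast : |f (t m) * v (m + 1)| ≤ M * η :=
    (abs_mul _ _).trans_le (mul_le_mul (hM m le_rfl) (hv _ le_rfl) (abs_nonneg _) hM0)
  have hfirst : |f (t 0) * v 0| ≤ M * η :=
    (abs_mul _ _).trans_le (mul_le_mul (hM 0 m.zero_le) (hv 0 (m + 1).zero_le) (abs_nonneg _) hM0)
  rw [sum_mul_sub_by_parts]
  linarith [abs_sub (f (t m) * v (m + 1)) (f (t 0) * v 0),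
    abs_sub (f (t m) * v (m + 1) - f (t 0) * v 0)
      (∑ j ∈ Finset.range m, (f (t (j + 1)) - f (t j)) * v (j + 1))]

section RS

variable {f : ℝ → ℝ} {a b : ℝ}

lemma RS_sub (g₁ g₂ : ℝ → ℝ) (P : TaggedPartition a b) :
    RS f g₁ P - RS f g₂ P = RS f (g₁ - g₂) P := by
  simp only [RS, ← Finset.sum_sub_distrib, Pi.sub_apply]
  exact Finset.sum_congr rfl fun _ _ => by ring

lemma abs_RS_le (hf : BoundedVariationOn f (Icc a b)) {M : ℝ} (hM : ∀ t ∈ Icc a b, |f t| ≤ M)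
    {h : ℝ → ℝ} {η : ℝ} (hh : ∀ t ∈ Icc a b, |h t| ≤ η) (P : TaggedPartition a b) :
    |RS f h P| ≤ (2 * M + var f a b) * η := by
  obtain ⟨m, hm⟩ : ∃ m, P.n = m + 1 := Nat.exists_eq_add_one.mpr P.n_pos
  have htag : ∀ i ≤ m, P.tag i ∈ Icc a b := fun i hi => P.tag_mem_Icc (by omega)
  rw [RS, hm]
  exact abs_sum_mul_sub_le hf
    (P.tag_monotoneOn.mono fun i (hi : i ≤ m) => show i < P.n by omega) htag
    (fun i hi => hM _ (htag i hi)) fun i hi => hh _ (P.pts_mem_Icc (j := i) (by omega))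

end RS

section KS

variable {f : ℝ → ℝ} {a b M : ℝ}

lemma HasKS.abs_sub_le (hab : a < b) (hf : BoundedVariationOn f (Icc a b))
    (hM : ∀ t ∈ Icc a b, |f t| ≤ M) {g₁ g₂ : ℝ → ℝ} {I₁ I₂ η : ℝ} (h₁ : HasKS f g₁ a b I₁)
    (h₂ : HasKS f g₂ a b I₂) (hη : ∀ t ∈ Icc a b, |g₁ t - g₂ t| ≤ η) :
    |I₁ - I₂| ≤ (2 * M + var f a b) * η := by
  refine le_of_forall_pos_lt_add fun ε hε => ?_
  obtain ⟨δ₁, hδ₁, hP₁⟩ := h₁ (ε / 2) (half_pos hε)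
  obtain ⟨δ₂, hδ₂, hP₂⟩ := h₂ (ε / 2) (half_pos hε)
  obtain ⟨P, hP⟩ := exists_isFine (δ := fun t => min (δ₁ t) (δ₂ t)) hab
    fun t ht => lt_min (hδ₁ t ht).1 (hδ₂ t ht).1
  have e₁ := abs_lt.mp (hP₁ P (hP.mono fun _ _ => min_le_left _ _))
  have e₂ := abs_lt.mp (hP₂ P (hP.mono fun _ _ => min_le_right _ _))
  have e := abs_le.mp (abs_RS_le hf hM (h := g₁ - g₂) hη P)
  rw [← RS_sub] at e
  rw [abs_lt]
  constructor <;> linarith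

lemma HasKS.cauchySeq (hab : a < b) (hf : BoundedVariationOn f (Icc a b))
    (hM : ∀ t ∈ Icc a b, |f t| ≤ M) {g : ℕ → ℝ → ℝ} {I : ℕ → ℝ}
    (hgn : ∀ n, HasKS f (g n) a b (I n)) (hg : UniformCauchySeqOn g atTop (Icc a b)) :
    CauchySeq I := by
  refine Metric.cauchySeq_iff.mpr fun ε hε => ?_
  obtain ⟨η, hη, hCη⟩ := exists_pos_mul_lt hε (2 * M + var f a b)
  obtain ⟨N, hN⟩ := Metric.uniformCauchySeqOn_iff.mp hg η hη
  exact ⟨N, fun m hm n hn => ((hgn m).abs_sub_le hab hf hM (hgn n)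
    fun t ht => (hN m hm n hn t ht).le).trans_lt hCη⟩

lemma HasKS.of_tendstoUniformlyOn (hf : BoundedVariationOn f (Icc a b))
    (hM : ∀ t ∈ Icc a b, |f t| ≤ M) {g : ℕ → ℝ → ℝ} {glim : ℝ → ℝ} {I : ℕ → ℝ} {J : ℝ}
    (hgn : ∀ n, HasKS f (g n) a b (I n)) (hg : TendstoUniformlyOn g glim atTop (Icc a b))
    (hI : Tendsto I atTop (𝓝 J)) : HasKS f glim a b J := by
  intro ε hε
  obtain ⟨η, hη, hCη⟩ := exists_pos_mul_lt (by positivity : 0 < ε / 3) (2 * M + var f a b)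
  obtain ⟨n, hgn_close, hIn⟩ := ((Metric.tendstoUniformlyOn_iff.mp hg η hη).and
    (Metric.tendsto_nhds.mp hI (ε / 3) (by positivity))).exists
  obtain ⟨δ, hδ, hP⟩ := hgn n (ε / 3) (by positivity)
  refine ⟨δ, hδ, fun P hPδ => ?_⟩
  have e := abs_le.mp (abs_RS_le hf hM (h := glim - g n)
    (fun t ht => (hgn_close t ht).le) P)
  rw [← RS_sub] at e
  have e₁ := abs_lt.mp (hP P hPδ)
  have e₂ := abs_lt.mp (Real.dist_eq (I n) J ▸ hIn)
  rw [abs_lt]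
  constructor <;> linarith

end KS

/-- convergence in the integrator for the Kurzweil–Stieltjes
integral. -/
theorem stmt15 (a b : ℝ) (hab : a < b) (f : ℝ → ℝ)
    (hf : BoundedVariationOn f (Set.Icc a b))
    (g : ℕ → ℝ → ℝ) (glim : ℝ → ℝ) (I : ℕ → ℝ)
    (hgn : ∀ n, HasKS f (g n) a b (I n))
    (hunif : TendstoUniformlyOn g glim Filter.atTop (Set.Icc a b)) :
    ∃ J : ℝ, HasKS f glim a b J ∧ Filter.Tendsto I Filter.atTop (nhds J) := by
  have hM : ∀ t ∈ Icc a b, |f t| ≤ |f a| + var f a b := fun t ht => hf.abs_le hab.le ht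
  obtain ⟨J, hJ⟩ := cauchySeq_tendsto_of_complete
    (HasKS.cauchySeq hab hf hM hgn hunif.uniformCauchySeqOn)
  exact ⟨J, HasKS.of_tendstoUniformlyOn hf hM hgn hunif hJ, hJ⟩
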